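/- (Transformer inequality for the operator relative entropy.) Let X and Y be positive definite complex n×n matrices and let M be a complex m×n matrix such that M Mᴴ is positive definite (i.e., M has full row rank, so that M X Mᴴ and M Y Mᴴ are positive definite). Then M · D_op(X‖Y) · Mᴴ − D_op(M X Mᴴ ‖ M Y Mᴴ) is positive semidefinite. -/

import Mathlib

open Matrix Kronecker
open scoped ComplexOrder

noncomputable section

/-- Apply a real function to a complex matrix via the spectral decomposition
(meaningful for Hermitian matrices; defined as `0` otherwise). -/
def matFun {n : Type*} [Fintype n] [DecidableEq n]
    (f : ℝ → ℝ) (A : Matrix n n ℂ) : Matrix n n ℂ :=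
  if hA : A.IsHermitian then
    (hA.eigenvectorUnitary : Matrix n n ℂ) *
      Matrix.diagonal (fun i => (f (hA.eigenvalues i) : ℂ)) *
      (hA.eigenvectorUnitary : Matrix n n ℂ)ᴴ
  else 0

/-- Real power of a matrix (via the spectral decomposition). -/
def mpow {n : Type*} [Fintype n] [DecidableEq n] (A : Matrix n n ℂ) (t : ℝ) :
    Matrix n n ℂ :=
  matFun (fun x => x ^ t) A

/-- Logarithm of a matrix (via the spectral decomposition). -/
def mlog {n : Type*} [Fintype n] [DecidableEq n] (A : Matrix n n ℂ) : Matrix n n ℂ :=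
  matFun Real.log A

/-- The operator relative entropy `D_op(X‖Y) = X^{1/2} log(X^{1/2} Y⁻¹ X^{1/2}) X^{1/2}`. -/
def Dop {n : Type*} [Fintype n] [DecidableEq n] (X Y : Matrix n n ℂ) : Matrix n n ℂ :=
  mpow X (1/2) * mlog (mpow X (1/2) * Y⁻¹ * mpow X (1/2)) * mpow X (1/2)

/-- The Belavkin--Staszewski relative entropy `D̂(ρ‖σ) = Re Tr[D_op(ρ‖σ)]`. -/
def BSEntropy {n : Type*} [Fintype n] [DecidableEq n] (ρ σ : Matrix n n ℂ) : ℝ :=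
  (Dop ρ σ).trace.re

/-- The weighted matrix geometric mean `G_t(X,Y) = X^{1/2} (X^{-1/2} Y X^{-1/2})^t X^{1/2}`. -/
def geoMean {n : Type*} [Fintype n] [DecidableEq n] (t : ℝ) (X Y : Matrix n n ℂ) :
    Matrix n n ℂ :=
  mpow X (1/2) * mpow (mpow X (-(1/2)) * Y * mpow X (-(1/2))) t * mpow X (1/2)

/-- Partial trace over the second (B) factor. -/
def ptraceB {R B : Type*} [Fintype B] (M : Matrix (R × B) (R × B) ℂ) : Matrix R R ℂ :=
  Matrix.of fun r r' => ∑ b, M (r, b) (r', b)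

/-- Partial trace over the first (R) factor. -/
def ptraceR {R A : Type*} [Fintype R] (M : Matrix (R × A) (R × A) ℂ) : Matrix A A ℂ :=
  Matrix.of fun a a' => ∑ r, M (r, a) (r, a')

/-- The map associated to a Choi matrix `J` (indexed by `(A × B) × (A × B)`), applied to a
matrix indexed by `(R × A) × (R × A)`. -/
def choiMap {R A B : Type*} [Fintype A] (J : Matrix (A × B) (A × B) ℂ)
    (X : Matrix (R × A) (R × A) ℂ) : Matrix (R × B) (R × B) ℂ :=
  Matrix.of fun p q => ∑ a, ∑ a', X (p.1, a) (q.1, a') * J (a, p.2) (a', q.2)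

/-! With `S = X^{1/2}` and `A = S Y⁻¹ S`, the scalar identity
`log a = ∫₀^∞ ((a⁻¹ + s)⁻¹ - (1 + s)⁻¹) ds`, applied on the spectrum of `A`, gives
`D_op(X‖Y) = ∫₀^∞ (X (Y + s X)⁻¹ X - (1 + s)⁻¹ X) ds`; here this is read through the quadratic form
of a fixed vector, as a limit of integrals over `[0, T]`. The map `(X, Z) ↦ X Z⁻¹ X` satisfies the
transformer inequality `(M X Mᴴ) (M Z Mᴴ)⁻¹ (M X Mᴴ) ≤ M (X Z⁻¹ X) Mᴴ`: conjugate the positive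
block matrix `[[Z, X], [X, X Z⁻¹ X]]` by `diag(M, M)` and take the Schur complement. Applied to
`Z = Y + s X` and integrated in `s` it gives the theorem, the terms `(1 + s)⁻¹ X` being carried
exactly onto each other by the conjugation. -/

open scoped MatrixOrder
open Filter Topology Set

section
variable {n : Type*} [Fintype n] [DecidableEq n]

lemma matFun_eq_cfc (f : ℝ → ℝ) (A : Matrix n n ℂ) : matFun f A = cfc f A := by
  by_cases hA : A.IsHermitian
  · rw [matFun, dif_pos hA, hA.cfc_eq, IsHermitian.cfc, Unitary.conjStarAlgAut_apply]
    rfl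
  · rw [matFun, dif_neg hA, cfc_apply_of_not_predicate A (show ¬IsSelfAdjoint A from hA)]

lemma isHermitian_mpow (X : Matrix n n ℂ) (t : ℝ) : (mpow X t).IsHermitian := by
  rw [mpow, matFun_eq_cfc]
  exact cfc_predicate _ X

lemma mpow_half_mul_self {X : Matrix n n ℂ} (hX : X.PosDef) :
    mpow X (1/2) * mpow X (1/2) = X := by
  rw [mpow, matFun_eq_cfc, ← cfc_mul ..]
  conv_rhs => rw [← cfc_id' ℝ X]
  refine cfc_congr fun x hx => ?_
  rw [← Real.rpow_add (hX.isStrictlyPositive.spectrum_pos hx)]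
  norm_num

lemma isUnit_mpow_half {X : Matrix n n ℂ} (hX : X.PosDef) : IsUnit (mpow X (1/2)) := by
  have h := hX.isUnit
  rw [← mpow_half_mul_self hX, Matrix.isUnit_iff_isUnit_det, Matrix.det_mul] at h
  exact (Matrix.isUnit_iff_isUnit_det _).2 (isUnit_of_mul_isUnit_left h)

lemma posDef_mpow_half_mul_inv_mul {X Y : Matrix n n ℂ} (hX : X.PosDef) (hY : Y.PosDef) :
    (mpow X (1/2) * Y⁻¹ * mpow X (1/2)).PosDef := by
  have h := hY.inv.mul_mul_conjTranspose_same
    (Matrix.vecMul_injective_iff_isUnit.2 (isUnit_mpow_half hX))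
  rwa [(isHermitian_mpow X _).eq] at h

lemma cfc_inv_add_inv {A : Matrix n n ℂ} (hA : A.PosDef) {s : ℝ} (hs : 0 ≤ s) :
    cfc (fun x => (x⁻¹ + s)⁻¹) A = (A⁻¹ + (s : ℂ) • 1)⁻¹ := by
  have hfin := A.finite_real_spectrum
  rw [cfc_inv (fun x => x⁻¹ + s) A (fun x hx => (add_pos_of_pos_of_nonneg
      (inv_pos.2 (hA.isStrictlyPositive.spectrum_pos hx)) hs).ne') (hfin.continuousOn _),
    cfc_add_const s _ A (hfin.continuousOn _), cfc_ringInverse_id _ hA.isUnit,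
    Matrix.nonsing_inv_eq_ringInverse, Matrix.nonsing_inv_eq_ringInverse,
    Algebra.algebraMap_eq_smul_one]
  rfl

lemma isHermitian_Dop (X Y : Matrix n n ℂ) : (Dop X Y).IsHermitian := by
  have h := isHermitian_mul_mul_conjTranspose (mpow X (1/2))
    (cfc_predicate Real.log (mpow X (1/2) * Y⁻¹ * mpow X (1/2)))
  rwa [(isHermitian_mpow X _).eq, ← matFun_eq_cfc] at h

lemma mul_inv_add_smul_mul_eq {X Y : Matrix n n ℂ} (hX : X.PosDef) (hY : Y.PosDef) {s : ℝ}
    (hs : 0 ≤ s) :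
    X * (Y + (s : ℂ) • X)⁻¹ * X = mpow X (1/2) *
      cfc (fun x => (x⁻¹ + s)⁻¹) (mpow X (1/2) * Y⁻¹ * mpow X (1/2)) * mpow X (1/2) := by
  rw [cfc_inv_add_inv (posDef_mpow_half_mul_inv_mul hX hY) hs]
  have hSS := mpow_half_mul_self hX
  set S := mpow X (1/2)
  rw [← hSS]
  have := (isUnit_mpow_half hX).invertible
  have := hY.isUnit.invertible
  have hsplit : Y + (s : ℂ) • (S * S) = S * ((S * Y⁻¹ * S)⁻¹ + (s : ℂ) • 1) * S := by
    simp only [Matrix.mul_inv_rev, inv_inv_of_invertible, Matrix.mul_add, Matrix.add_mul,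
      Matrix.mul_smul, Matrix.smul_mul, Matrix.mul_one, Matrix.mul_assoc,
      Matrix.mul_inv_cancel_left_of_invertible, Matrix.inv_mul_of_invertible]
  rw [hsplit]
  simp only [Matrix.mul_inv_rev, Matrix.mul_assoc, Matrix.mul_inv_cancel_left_of_invertible,
    Matrix.inv_mul_cancel_left_of_invertible]

end

section
variable {m n : Type*} [Fintype m] [Fintype n]

def reQuadForm (A : Matrix n n ℂ) (u : n → ℂ) : ℝ := (star u ⬝ᵥ (A *ᵥ u)).re

lemma reQuadForm_sub (A B : Matrix n n ℂ) (u : n → ℂ) :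
    reQuadForm (A - B) u = reQuadForm A u - reQuadForm B u := by
  simp only [reQuadForm, Matrix.sub_mulVec, dotProduct_sub, Complex.sub_re]

lemma reQuadForm_mul_mul_conjTranspose (M : Matrix m n ℂ) (B : Matrix n n ℂ) (v : m → ℂ) :
    reQuadForm (M * B * Mᴴ) v = reQuadForm B (Mᴴ *ᵥ v) := by
  rw [reQuadForm, reQuadForm, star_mulVec, conjTranspose_conjTranspose, ← dotProduct_mulVec,
    mulVec_mulVec, mulVec_mulVec, Matrix.mul_assoc]

lemma Matrix.PosSemidef.reQuadForm_nonneg {A : Matrix n n ℂ} (hA : A.PosSemidef) (u : n → ℂ) :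
    0 ≤ reQuadForm A u :=
  hA.re_dotProduct_nonneg u

lemma Matrix.IsHermitian.posSemidef_of_reQuadForm_nonneg {A : Matrix n n ℂ} (hA : A.IsHermitian)
    (h : ∀ u, 0 ≤ reQuadForm A u) : A.PosSemidef :=
  .of_dotProduct_mulVec_nonneg hA fun u =>
    RCLike.nonneg_iff.2 ⟨h u, hA.im_star_dotProduct_mulVec_self u⟩

lemma injective_vecMul_of_posDef_mul_conjTranspose [DecidableEq m] {M : Matrix m n ℂ}
    (hM : (M * Mᴴ).PosDef) : Function.Injective M.vecMul := fun v w h => by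
  refine Matrix.vecMul_injective_iff_isUnit.2 hM.isUnit ?_
  simp only [← vecMul_vecMul]
  exact congrArg (· ᵥ* Mᴴ) h

variable [DecidableEq n]

lemma reQuadForm_diagonal (g : n → ℝ) (w : n → ℂ) :
    reQuadForm (diagonal fun i => (g i : ℂ)) w = ∑ i, g i * Complex.normSq (w i) := by
  simp only [reQuadForm, dotProduct, mulVec_diagonal, Pi.star_apply, Complex.re_sum]
  refine Finset.sum_congr rfl fun i _ => ?_
  rw [mul_left_comm, Complex.star_def, ← Complex.normSq_eq_conj_mul_self, ← Complex.ofReal_mul,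
    Complex.ofReal_re]

lemma reQuadForm_cfc {A : Matrix n n ℂ} (hA : A.IsHermitian) (f : ℝ → ℝ) (w : n → ℂ) :
    reQuadForm (cfc f A) w = ∑ i, f (hA.eigenvalues i) *
      Complex.normSq ((star (hA.eigenvectorUnitary : Matrix n n ℂ) *ᵥ w) i) := by
  rw [hA.cfc_eq, IsHermitian.cfc, Unitary.conjStarAlgAut_apply, Matrix.star_eq_conjTranspose,
    reQuadForm_mul_mul_conjTranspose]
  exact reQuadForm_diagonal (f ∘ hA.eigenvalues) _

lemma posSemidef_conj_conjTranspose_mul_inv_mul_sub [DecidableEq m] {Z : Matrix n n ℂ}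
    (hZ : Z.PosDef) {M : Matrix m n ℂ} (hMZ : (M * Z * Mᴴ).PosDef) (B : Matrix n n ℂ) :
    (M * (Bᴴ * Z⁻¹ * B) * Mᴴ - (M * B * Mᴴ)ᴴ * (M * Z * Mᴴ)⁻¹ * (M * B * Mᴴ)).PosSemidef := by
  have := hZ.isUnit.invertible
  have := hMZ.isUnit.invertible
  have hblock : (Matrix.fromBlocks Z B Bᴴ (Bᴴ * Z⁻¹ * B)).PosSemidef := by
    rw [PosDef.fromBlocks₁₁ B _ hZ, sub_self]
    exact .zero
  have hconj := hblock.mul_mul_conjTranspose_same (Matrix.fromBlocks M 0 0 M)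
  simp only [Matrix.fromBlocks_conjTranspose, Matrix.fromBlocks_multiply, Matrix.conjTranspose_zero,
    Matrix.mul_zero, Matrix.zero_mul, add_zero, zero_add] at hconj
  refine (PosDef.fromBlocks₁₁ _ _ hMZ).1 ?_
  simpa only [conjTranspose_mul, conjTranspose_conjTranspose, Matrix.mul_assoc] using hconj

end

section
open Real intervalIntegral

lemma intervalIntegrable_of_continuousOn_Ici {f : ℝ → ℝ} {a b : ℝ} (hf : ContinuousOn f (Ici a))
    (hab : a ≤ b) : IntervalIntegrable f MeasureTheory.volume a b :=
  (hf.mono (by simp [uIcc_of_le hab, Icc_subset_Ici_self])).intervalIntegrable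

def logIntegrand (a s : ℝ) : ℝ := (a⁻¹ + s)⁻¹ - (1 + s)⁻¹

lemma continuousOn_inv_const_add {b : ℝ} (hb : 0 < b) :
    ContinuousOn (fun s : ℝ => (b + s)⁻¹) (Ici 0) :=
  (continuousOn_const.add continuousOn_id).inv₀ fun _ hs => (add_pos_of_pos_of_nonneg hb hs).ne'

lemma continuousOn_logIntegrand {a : ℝ} (ha : 0 < a) : ContinuousOn (logIntegrand a) (Ici 0) :=
  (continuousOn_inv_const_add (inv_pos.2 ha)).sub (continuousOn_inv_const_add one_pos)

lemma integral_inv_const_add {b T : ℝ} (hb : 0 < b) (hT : 0 ≤ T) :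
    ∫ s in (0 : ℝ)..T, (b + s)⁻¹ = log (b + T) - log b := by
  rw [integral_comp_add_left (fun x => x⁻¹), add_zero,
    integral_inv_of_pos hb (by positivity), log_div (by positivity) hb.ne']

lemma tendsto_integral_logIntegrand {a : ℝ} (ha : 0 < a) :
    Tendsto (fun T => ∫ s in (0 : ℝ)..T, logIntegrand a s) atTop (𝓝 (log a)) := by
  have hlim : Tendsto (fun T => (log (T + a⁻¹) - log T) - (log (T + 1) - log T) + log a)
      atTop (𝓝 (0 - 0 + log a)) :=
    ((tendsto_log_comp_add_sub_log _).sub (tendsto_log_comp_add_sub_log _)).add_const _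
  rw [sub_zero, zero_add] at hlim
  refine hlim.congr' ?_
  filter_upwards [eventually_ge_atTop 0] with T hT
  unfold logIntegrand
  rw [integral_sub
    (intervalIntegrable_of_continuousOn_Ici (continuousOn_inv_const_add (inv_pos.2 ha)) hT)
    (intervalIntegrable_of_continuousOn_Ici (continuousOn_inv_const_add one_pos) hT),
    integral_inv_const_add (inv_pos.2 ha) hT, integral_inv_const_add one_pos hT, log_inv, log_one]
  ring_nf

lemma tendsto_integral_sum_logIntegrand {ι : Type*} [Fintype ι] (c : ι → ℝ) {lam : ι → ℝ}
    (hlam : ∀ i, 0 < lam i) :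
    Tendsto (fun T => ∫ s in (0 : ℝ)..T, ∑ i, c i * logIntegrand (lam i) s) atTop
      (𝓝 (∑ i, c i * log (lam i))) := by
  refine (tendsto_finsetSum _ fun i _ =>
    (tendsto_integral_logIntegrand (hlam i)).const_mul (c i)).congr' ?_
  filter_upwards [eventually_ge_atTop 0] with T hT
  rw [integral_finsetSum fun i _ =>
    (intervalIntegrable_of_continuousOn_Ici (continuousOn_logIntegrand (hlam i)) hT).const_mul _]
  simp only [integral_const_mul]

end

section
variable {m n : Type*} [Fintype m] [Fintype n] [DecidableEq n]

def DopIntegrand (X Y : Matrix n n ℂ) (u : n → ℂ) (s : ℝ) : ℝ :=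
  reQuadForm (X * (Y + (s : ℂ) • X)⁻¹ * X) u - (1 + s)⁻¹ * reQuadForm X u

lemma exists_DopIntegrand_eq_sum {X Y : Matrix n n ℂ} (hX : X.PosDef) (hY : Y.PosDef)
    (u : n → ℂ) : ∃ c lam : n → ℝ, (∀ i, 0 < lam i) ∧
      reQuadForm (Dop X Y) u = ∑ i, c i * Real.log (lam i) ∧
      EqOn (DopIntegrand X Y u) (fun s => ∑ i, c i * logIntegrand (lam i) s) (Ici 0) := by
  have hA := posDef_mpow_half_mul_inv_mul hX hY
  have hSS := mpow_half_mul_self hX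
  set S := mpow X (1/2)
  have hSH : Sᴴ = S := isHermitian_mpow X _
  set U := (hA.1.eigenvectorUnitary : Matrix n n ℂ)
  set c := fun i => Complex.normSq ((star U *ᵥ (S *ᵥ u)) i)
  have hq : ∀ f, reQuadForm (S * cfc f (S * Y⁻¹ * S) * S) u =
      ∑ i, c i * f (hA.1.eigenvalues i) := fun f => by
    have hconj := reQuadForm_mul_mul_conjTranspose Sᴴ (cfc f (S * Y⁻¹ * S)) u
    rw [conjTranspose_conjTranspose, hSH] at hconj
    rw [hconj, reQuadForm_cfc hA.1]
    exact Finset.sum_congr rfl fun i _ => mul_comm _ _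
  refine ⟨c, hA.1.eigenvalues, hA.eigenvalues_pos, ?_, fun s (hs : 0 ≤ s) => ?_⟩
  · rw [← hq, Dop, mlog, matFun_eq_cfc]
  · have hXq : reQuadForm X u = ∑ i, c i * 1 := by
      rw [← hq fun _ => 1, cfc_const_one ℝ (S * Y⁻¹ * S), Matrix.mul_one, hSS]
    rw [DopIntegrand, mul_inv_add_smul_mul_eq hX hY hs, hq, hXq, Finset.mul_sum,
      ← Finset.sum_sub_distrib]
    simp only [logIntegrand]
    refine Finset.sum_congr rfl fun i _ => by ring

lemma continuousOn_DopIntegrand {X Y : Matrix n n ℂ} (hX : X.PosDef) (hY : Y.PosDef)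
    (u : n → ℂ) : ContinuousOn (DopIntegrand X Y u) (Ici 0) := by
  obtain ⟨c, lam, hlam, -, heq⟩ := exists_DopIntegrand_eq_sum hX hY u
  exact (continuousOn_finsetSum _ fun i _ =>
    continuousOn_const.mul (continuousOn_logIntegrand (hlam i))).congr heq

lemma tendsto_integral_DopIntegrand {X Y : Matrix n n ℂ} (hX : X.PosDef) (hY : Y.PosDef)
    (u : n → ℂ) :
    Tendsto (fun T => ∫ s in (0 : ℝ)..T, DopIntegrand X Y u s) atTop
      (𝓝 (reQuadForm (Dop X Y) u)) := by
  obtain ⟨c, lam, hlam, hDop, heq⟩ := exists_DopIntegrand_eq_sum hX hY u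
  rw [hDop]
  refine (tendsto_integral_sum_logIntegrand c hlam).congr' ?_
  filter_upwards [eventually_ge_atTop 0] with T hT
  refine intervalIntegral.integral_congr fun s hs => (heq ?_).symm
  exact (uIcc_of_le hT ▸ hs).1

lemma DopIntegrand_conj_le [DecidableEq m] {X Y : Matrix n n ℂ} (hX : X.PosDef) (hY : Y.PosDef)
    {M : Matrix m n ℂ} (hM : (M * Mᴴ).PosDef) (v : m → ℂ) {s : ℝ} (hs : 0 ≤ s) :
    DopIntegrand (M * X * Mᴴ) (M * Y * Mᴴ) v s ≤ DopIntegrand X Y (Mᴴ *ᵥ v) s := by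
  have hinj := injective_vecMul_of_posDef_mul_conjTranspose hM
  have hZ : (Y + (s : ℂ) • X).PosDef := hY.add_posSemidef (hX.posSemidef.smul (by simpa))
  have hconj := posSemidef_conj_conjTranspose_mul_inv_mul_sub hZ
    (hZ.mul_mul_conjTranspose_same hinj) X
  rw [hX.isHermitian.eq, (hX.mul_mul_conjTranspose_same hinj).isHermitian.eq, Matrix.mul_add,
    Matrix.add_mul, Matrix.mul_smul, Matrix.smul_mul] at hconj
  have hle := hconj.reQuadForm_nonneg v
  rw [reQuadForm_sub, reQuadForm_mul_mul_conjTranspose, sub_nonneg] at hle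
  rw [DopIntegrand, DopIntegrand, reQuadForm_mul_mul_conjTranspose M X]
  exact sub_le_sub_right hle _

lemma reQuadForm_Dop_conj_le [DecidableEq m] {X Y : Matrix n n ℂ} (hX : X.PosDef)
    (hY : Y.PosDef) {M : Matrix m n ℂ} (hM : (M * Mᴴ).PosDef) (v : m → ℂ) :
    reQuadForm (Dop (M * X * Mᴴ) (M * Y * Mᴴ)) v ≤ reQuadForm (M * Dop X Y * Mᴴ) v := by
  have hinj := injective_vecMul_of_posDef_mul_conjTranspose hM
  have hX' := hX.mul_mul_conjTranspose_same hinj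
  have hY' := hY.mul_mul_conjTranspose_same hinj
  rw [reQuadForm_mul_mul_conjTranspose]
  refine le_of_tendsto_of_tendsto (tendsto_integral_DopIntegrand hX' hY' v)
    (tendsto_integral_DopIntegrand hX hY _) ?_
  filter_upwards [eventually_ge_atTop 0] with T hT
  exact intervalIntegral.integral_mono_on hT
    (intervalIntegrable_of_continuousOn_Ici (continuousOn_DopIntegrand hX' hY' v) hT)
    (intervalIntegrable_of_continuousOn_Ici (continuousOn_DopIntegrand hX hY _) hT)
    fun s hs => DopIntegrand_conj_le hX hY hM v hs.1

end

/-- transformer inequality for the operator relative entropy: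
`M · D_op(X‖Y) · Mᴴ − D_op(M X Mᴴ ‖ M Y Mᴴ)` is positive semidefinite. -/
theorem Dop_conj_transformer_inequality {m n : ℕ}
    (X Y : Matrix (Fin n) (Fin n) ℂ) (hX : X.PosDef) (hY : Y.PosDef)
    (M : Matrix (Fin m) (Fin n) ℂ) (hM : (M * Mᴴ).PosDef) :
    (M * Dop X Y * Mᴴ - Dop (M * X * Mᴴ) (M * Y * Mᴴ)).PosSemidef := by
  refine ((isHermitian_mul_mul_conjTranspose M (isHermitian_Dop X Y)).sub
    (isHermitian_Dop _ _)).posSemidef_of_reQuadForm_nonneg fun v => ?_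
  rw [reQuadForm_sub, sub_nonneg]
  exact reQuadForm_Dop_conj_le hX hY hM v
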